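/- Let T_n be the sequence of polynomials defined by T_0(x) = x and T_n(x) = (1 - x²)·T_{n-1}'(x) for n ≥ 1. Then for every n ≥ 0, T_n(0) equals the n-th derivative of tanh evaluated at 0; in particular T_{2n}(0) = 0 for all n ≥ 1, and the integers |T_{2m-1}(0)| are the tangent numbers. -/

import Mathlib

/-! The derivative of `tanh` is `1 - tanh²`, so by induction `tanh⁽ⁿ⁾ = Tₙ ∘ tanh`, and evaluating at
`tanh 0 = 0` gives the first claim. Differentiation followed by multiplication by the even polynomial
`1 - X²` flips parity, so `Tₙ` has the parity of `n + 1` and vanishes at `0` for even `n`. The recursion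
has integer coefficients, so every `Tₙ` lies in `ℤ[X]`. -/

open Polynomial Real

noncomputable def T : ℕ → Polynomial ℚ
  | 0 => Polynomial.X
  | n + 1 => (1 - Polynomial.X ^ 2) * Polynomial.derivative (T n)

theorem Real.hasDerivAt_tanh (x : ℝ) : HasDerivAt tanh (1 - tanh x ^ 2) x := by
  have hcosh : cosh x ≠ 0 := (cosh_pos x).ne'
  have hquot := (hasDerivAt_sinh x).div (hasDerivAt_cosh x) hcosh
  rw [show sinh / cosh = tanh from funext fun y => (tanh_eq_sinh_div_cosh y).symm] at hquot
  refine hquot.congr_deriv ?_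
  rw [tanh_eq_sinh_div_cosh]
  field_simp

theorem iteratedDeriv_eq_aeval_of_hasDerivAt {R 𝕜 : Type*} [CommSemiring R]
    [NontriviallyNormedField 𝕜] [Algebra R 𝕜] {f : 𝕜 → 𝕜} {q : R[X]}
    (hf : ∀ x, HasDerivAt f (aeval (f x) q) x) {P : ℕ → R[X]} (hP₀ : P 0 = X)
    (hP : ∀ n, P (n + 1) = q * derivative (P n)) (n : ℕ) :
    iteratedDeriv n f = fun x => aeval (f x) (P n) := by
  induction n with
  | zero => simp [hP₀]
  | succ n ih =>
    funext x
    rw [iteratedDeriv_succ, ih, hP, map_mul, mul_comm]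
    exact ((Polynomial.hasDerivAt_aeval (P n) (f x)).comp x (hf x)).deriv

theorem iteratedDeriv_tanh (n : ℕ) : iteratedDeriv n tanh = fun x => aeval (tanh x) (T n) :=
  iteratedDeriv_eq_aeval_of_hasDerivAt (q := 1 - X ^ 2)
    (fun x => by simpa using hasDerivAt_tanh x) rfl (fun _ => rfl) n

theorem Polynomial.derivative_comp_neg_X {R : Type*} [CommRing R] (p : R[X]) :
    derivative (p.comp (-X)) = -(derivative p).comp (-X) := by
  simp [derivative_comp]

theorem T_comp_neg_X (n : ℕ) : (T n).comp (-X) = (-1) ^ (n + 1) * T n := by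
  induction n with
  | zero => simp [T]
  | succ n ih =>
    have hderiv : (derivative (T n)).comp (-X) = (-1) ^ (n + 2) * derivative (T n) := by
      rw [← neg_neg ((derivative (T n)).comp (-X)), ← derivative_comp_neg_X, ih]
      simp [pow_succ]
    rw [T, mul_comp_neg_X, hderiv]
    simp only [sub_comp, one_comp, pow_comp, X_comp, even_two, Even.neg_pow]
    ring

theorem T_eval_zero_of_even {n : ℕ} (hn : Even n) : (T n).eval 0 = 0 := by
  have h := congrArg (eval 0) (T_comp_neg_X n)
  simp only [eval_comp, eval_neg, eval_X, neg_zero, eval_mul, eval_one,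
    (hn.add_one).neg_one_pow] at h
  linarith

theorem exists_T_eq_map_intCast (n : ℕ) : ∃ p : ℤ[X], T n = p.map (Int.castRingHom ℚ) := by
  induction n with
  | zero => exact ⟨X, by simp [T]⟩
  | succ n ih =>
    obtain ⟨p, hp⟩ := ih
    exact ⟨(1 - X ^ 2) * derivative p, by simp [T, hp, derivative_map]⟩

theorem T_at_zero_eq_iteratedDeriv_tanh :
    (∀ n : ℕ, (Polynomial.aeval (0 : ℝ) (T n)) = iteratedDeriv n Real.tanh 0) ∧
    (∀ n : ℕ, 1 ≤ n → (T (2 * n)).eval 0 = 0) ∧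
    (∀ m : ℕ, 1 ≤ m → ∃ k : ℤ, (T (2 * m - 1)).eval 0 = (k : ℚ)) := by
  refine ⟨fun n => ?_, fun n _ => T_eval_zero_of_even (even_two_mul n), fun m _ => ?_⟩
  · simp only [iteratedDeriv_tanh, tanh_zero]
  · obtain ⟨p, hp⟩ := exists_T_eq_map_intCast (2 * m - 1)
    exact ⟨p.eval 0, by simp [hp]⟩
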